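/- Let B be a unital C*-algebra, A a norm-closed unital subalgebra of B containing the unit of B, and p a projection in B** that is open in B**. Let C = pB**p ∩ B and D = A ∩ C. If p is open in A** (i.e. p ∈ (pA**p ∩ A)^⊥⊥), then M(C:D) equals the closure of D inside M(C) with respect to the strict topology β_C. -/

import Mathlib

set_option linter.unusedSectionVars false

/- Common definitions: bidual of a (C*-)algebra, Arens product, annihilators,
open/closed projections, multiplier algebras, strict topology, etc. -/

noncomputable section

open Filter Topology ComplexConjugate Pointwise

namespace OAPaper

variable {B : Type} [NonUnitalNormedRing B]
  [NormedSpace ℂ B] [IsScalarTower ℂ B B] [SMulCommClass ℂ B B]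

/-- The dual space `B*`. -/
abbrev Dl (B : Type) [NonUnitalNormedRing B] [NormedSpace ℂ B] : Type :=
  StrongDual ℂ B

/-- The bidual `B**`. -/
abbrev Bidual (B : Type) [NonUnitalNormedRing B] [NormedSpace ℂ B] : Type :=
  StrongDual ℂ (StrongDual ℂ B)

/-- The canonical embedding of `B` into its bidual. -/
def jj : B →L[ℂ] Bidual B := NormedSpace.inclusionInDoubleDual ℂ B

lemma norm_jj_apply_le (b : B) : ‖jj b‖ ≤ ‖b‖ := by
  exact NormedSpace.double_dual_bound ℂ B b

/-- `fA f a = f(a·)`. -/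
def fA (f : Dl B) (a : B) : Dl B := f.comp (ContinuousLinearMap.mul ℂ B a)

@[simp] lemma fA_apply (f : Dl B) (a b : B) : fA f a b = f (a * b) := rfl

lemma fA_norm_le (f : Dl B) (a : B) : ‖fA f a‖ ≤ ‖f‖ * ‖a‖ :=
  ContinuousLinearMap.opNorm_le_bound _ (by positivity) fun b => by
    calc ‖f (a * b)‖ ≤ ‖f‖ * ‖a * b‖ := f.le_opNorm _
    _ ≤ ‖f‖ * (‖a‖ * ‖b‖) := by gcongr; exact norm_mul_le a b
    _ = ‖f‖ * ‖a‖ * ‖b‖ := (mul_assoc _ _ _).symm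

lemma fA_add_left (f g : Dl B) (a : B) : fA (f + g) a = fA f a + fA g a := by
  ext b; simp [fA]

lemma fA_smul_left (c : ℂ) (f : Dl B) (a : B) : fA (c • f) a = c • fA f a := by
  ext b; simp [fA]

/-- `nF n f = n(f(a·))` as a functional of `a`. -/
def nF (n : Bidual B) (f : Dl B) : Dl B :=
  LinearMap.mkContinuous
    { toFun := fun a => n (fA f a)
      map_add' := fun a b => by
        have h : fA f (a + b) = fA f a + fA f b := by ext c; simp [add_mul]
        (try dsimp only); rw [h, map_add]
      map_smul' := fun c a => by
        have h : fA f (c • a) = c • fA f a := by ext d; simp [smul_mul_assoc]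
        (try dsimp only); rw [h, ContinuousLinearMap.map_smul]; simp }
    (‖n‖ * ‖f‖)
    (fun a => by
      calc ‖n (fA f a)‖ ≤ ‖n‖ * ‖fA f a‖ := n.le_opNorm _
      _ ≤ ‖n‖ * (‖f‖ * ‖a‖) := by gcongr; exact fA_norm_le f a
      _ = ‖n‖ * ‖f‖ * ‖a‖ := (mul_assoc _ _ _).symm)

@[simp] lemma nF_apply (n : Bidual B) (f : Dl B) (a : B) : nF n f a = n (fA f a) := rfl

lemma nF_norm_le (n : Bidual B) (f : Dl B) : ‖nF n f‖ ≤ ‖n‖ * ‖f‖ :=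
  LinearMap.mkContinuous_norm_le _ (by positivity) _

lemma nF_add_right (n : Bidual B) (f g : Dl B) : nF n (f + g) = nF n f + nF n g := by
  ext a; simp [fA_add_left]

lemma nF_smul_right (n : Bidual B) (c : ℂ) (f : Dl B) : nF n (c • f) = c • nF n f := by
  ext a; simp [fA_smul_left]

lemma nF_add_left (m n : Bidual B) (f : Dl B) : nF (m + n) f = nF m f + nF n f := by
  ext a; simp

lemma nF_smul_left (c : ℂ) (n : Bidual B) (f : Dl B) : nF (c • n) f = c • nF n f := by
  ext a; simp

lemma nF_zero_left (f : Dl B) : nF (0 : Bidual B) f = 0 := by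
  ext a; simp

/-- The (first) Arens product on the bidual `B**`. -/
def arens (m n : Bidual B) : Bidual B :=
  LinearMap.mkContinuous
    { toFun := fun f => m (nF n f)
      map_add' := fun f g => by (try dsimp only); rw [nF_add_right, map_add]
      map_smul' := fun c f => by
        (try dsimp only); rw [nF_smul_right, ContinuousLinearMap.map_smul]; simp }
    (‖m‖ * ‖n‖)
    (fun f => by
      calc ‖m (nF n f)‖ ≤ ‖m‖ * ‖nF n f‖ := m.le_opNorm _
      _ ≤ ‖m‖ * (‖n‖ * ‖f‖) := by gcongr; exact nF_norm_le n f
      _ = ‖m‖ * ‖n‖ * ‖f‖ := (mul_assoc _ _ _).symm)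

@[simp] lemma arens_apply (m n : Bidual B) (f : Dl B) : arens m n f = m (nF n f) := rfl

lemma arens_norm_le (m n : Bidual B) : ‖arens m n‖ ≤ ‖m‖ * ‖n‖ :=
  LinearMap.mkContinuous_norm_le _ (by positivity) _

lemma arens_add_left (m₁ m₂ n : Bidual B) :
    arens (m₁ + m₂) n = arens m₁ n + arens m₂ n := by ext f; simp

lemma arens_smul_left (c : ℂ) (m n : Bidual B) :
    arens (c • m) n = c • arens m n := by ext f; simp

lemma arens_add_right (m n₁ n₂ : Bidual B) :
    arens m (n₁ + n₂) = arens m n₁ + arens m n₂ := by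
  ext f; simp [nF_add_left]

lemma arens_smul_right (c : ℂ) (m n : Bidual B) :
    arens m (c • n) = c • arens m n := by
  ext f; simp [nF_smul_left]

lemma arens_zero_left (n : Bidual B) : arens (0 : Bidual B) n = 0 := by ext f; simp

lemma arens_zero_right (m : Bidual B) : arens m (0 : Bidual B) = 0 := by
  ext f; simp [nF_zero_left]

section StarPart

variable [StarRing B] [CStarRing B] [StarModule ℂ B]

/-- The adjoint of a functional: `(dstar f)(a) = conj (f (a*))`. -/
def dstar (f : Dl B) : Dl B :=
  LinearMap.mkContinuous
    { toFun := fun a => conj (f (star a))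
      map_add' := fun a b => by simp [star_add]
      map_smul' := fun c a => by
        simp [star_smul, Complex.star_def, smul_eq_mul, map_mul] }
    ‖f‖
    (fun a => by
      calc ‖conj (f (star a))‖ = ‖f (star a)‖ := RCLike.norm_conj _
      _ ≤ ‖f‖ * ‖star a‖ := f.le_opNorm _
      _ = ‖f‖ * ‖a‖ := by rw [norm_star])

@[simp] lemma dstar_apply (f : Dl B) (a : B) : dstar f a = conj (f (star a)) := rfl

lemma dstar_norm_le (f : Dl B) : ‖dstar f‖ ≤ ‖f‖ :=
  LinearMap.mkContinuous_norm_le _ (norm_nonneg f) _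

lemma dstar_add (f g : Dl B) : dstar (f + g) = dstar f + dstar g := by
  ext a; simp

lemma dstar_smul (c : ℂ) (f : Dl B) : dstar (c • f) = conj c • dstar f := by
  ext a; simp [smul_eq_mul, map_mul]

/-- The involution on the bidual: `(bstar m)(f) = conj (m (dstar f))`. -/
def bstar (m : Bidual B) : Bidual B :=
  LinearMap.mkContinuous
    { toFun := fun f => conj (m (dstar f))
      map_add' := fun f g => by (try dsimp only); rw [dstar_add, map_add]; simp
      map_smul' := fun c f => by
        (try dsimp only); rw [dstar_smul, ContinuousLinearMap.map_smul]
        simp [smul_eq_mul, map_mul] }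
    ‖m‖
    (fun f => by
      calc ‖conj (m (dstar f))‖ = ‖m (dstar f)‖ := RCLike.norm_conj _
      _ ≤ ‖m‖ * ‖dstar f‖ := m.le_opNorm _
      _ ≤ ‖m‖ * ‖f‖ := by gcongr; exact dstar_norm_le f)

@[simp] lemma bstar_apply (m : Bidual B) (f : Dl B) : bstar m f = conj (m (dstar f)) := rfl

/-- A projection in the bidual: a self-adjoint idempotent for the Arens product. -/
def IsProjE (p : Bidual B) : Prop := arens p p = p ∧ bstar p = p

end StarPart

/-- The annihilator `S^⊥ ⊆ B*` of a set `S ⊆ B`. -/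
def ann (S : Set B) : Set (Dl B) := {f | ∀ a ∈ S, f a = 0}

/-- The bi-annihilator `S^⊥⊥ ⊆ B**` of a set `S ⊆ B`. -/
def biann (S : Set B) : Set (Bidual B) := {m | ∀ f ∈ ann S, m f = 0}

/-- The pre-annihilator `S_⊥ ⊆ B*` of a set `S ⊆ B**`. -/
def preAnn (S : Set (Bidual B)) : Set (Dl B) := {f | ∀ m ∈ S, m f = 0}

/-- Image of a subset of `B` in the bidual. -/
def jset (S : Set B) : Set (Bidual B) := (fun b : B => jj b) '' S

/-- `p` is an open projection in `B**`: `p` is a projection which is the weak* limit of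
an increasing net of positive elements of `B`. -/
def IsOpenP [StarRing B] [CStarRing B] [StarModule ℂ B] [PartialOrder B]
    [StarOrderedRing B] (p : Bidual B) : Prop :=
  IsProjE p ∧
    ∃ (ι : Type) (pr : Preorder ι), Nonempty ι ∧
      (∀ i k : ι, ∃ l : ι, pr.le i l ∧ pr.le k l) ∧
      ∃ e : ι → B, (∀ i k : ι, pr.le i k → e i ≤ e k) ∧ (∀ i, 0 ≤ e i) ∧
        ∀ f : Dl B, Tendsto (fun i => jj (e i) f) (@atTop ι pr) (𝓝 (p f))

/-- `D` possesses a contractive approximate identity. -/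
def HasCAI (D : Set B) : Prop :=
  ∃ (ι : Type) (pr : Preorder ι), Nonempty ι ∧
    (∀ i k : ι, ∃ l : ι, pr.le i l ∧ pr.le k l) ∧
    ∃ e : ι → B, (∀ i, e i ∈ D ∧ ‖e i‖ ≤ 1) ∧
      ∀ x ∈ D, Tendsto (fun i => e i * x) (@atTop ι pr) (𝓝 x) ∧
        Tendsto (fun i => x * e i) (@atTop ι pr) (𝓝 x)

/-- `D` possesses an approximate identity (bounded or unbounded) which is also an
approximate identity for `C`. -/
def HasJointAI (D C : Set B) : Prop :=
  ∃ (ι : Type) (pr : Preorder ι), Nonempty ι ∧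
    (∀ i k : ι, ∃ l : ι, pr.le i l ∧ pr.le k l) ∧
    ∃ e : ι → B, (∀ i, e i ∈ D) ∧
      (∀ x ∈ D, Tendsto (fun i => e i * x) (@atTop ι pr) (𝓝 x) ∧
        Tendsto (fun i => x * e i) (@atTop ι pr) (𝓝 x)) ∧
      (∀ x ∈ C, Tendsto (fun i => e i * x) (@atTop ι pr) (𝓝 x) ∧
        Tendsto (fun i => x * e i) (@atTop ι pr) (𝓝 x))

/-- Membership in the closure of `S ⊆ B**` with respect to the strict topology `β_C`
determined by `C ⊆ B`, i.e. the locally convex topology generated by the seminorms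
`η ↦ ‖ηb‖ + ‖cη‖` for `b, c ∈ C`:  every basic `β_C`-neighborhood of `x` meets `S`. -/
def inStrictClosure (C : Set B) (S : Set (Bidual B)) (x : Bidual B) : Prop :=
  ∀ F : Finset (B × B), (∀ bc ∈ F, bc.1 ∈ C ∧ bc.2 ∈ C) → ∀ ε : ℝ, 0 < ε →
    ∃ s ∈ S, ∀ bc ∈ F,
      ‖arens (x - s) (jj bc.1)‖ + ‖arens (jj bc.2) (x - s)‖ < ε

/-- The multiplier algebra `M(C) = {η ∈ C** : ηC ⊆ C and Cη ⊆ C}`, realized inside `B**`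
(identifying `C**` with the bi-annihilator `C^⊥⊥` of `C` in `B**`). -/
def mult (C : Set B) : Set (Bidual B) :=
  {η | η ∈ biann C ∧ (∀ c ∈ C, ∃ c' ∈ C, arens η (jj c) = jj c') ∧
    (∀ c ∈ C, ∃ c' ∈ C, arens (jj c) η = jj c')}

/-- `M(C : D) = {η ∈ M(C) : ηD ⊆ D and Dη ⊆ D}`. -/
def multRel (C D : Set B) : Set (Bidual B) :=
  {η | η ∈ mult C ∧ (∀ d ∈ D, ∃ d' ∈ D, arens η (jj d) = jj d') ∧
    (∀ d ∈ D, ∃ d' ∈ D, arens (jj d) η = jj d')}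

/-- `pB**p ∩ B`, the hereditary subalgebra of `B` supported by `p`, as a subset of `B`. -/
def herB (p : Bidual B) : Set B :=
  {b : B | ∃ m : Bidual B, arens (arens p m) p = jj b}

/-- `pA**p ∩ A`, where `A**` is identified with `A^⊥⊥ ⊆ B**`, as a subset of `B`. -/
def herSub (A : Set B) (p : Bidual B) : Set B :=
  {a : B | a ∈ A ∧ ∃ m ∈ biann A, arens (arens p m) p = jj a}

/-- `p` is open in `A**`: `p` is a projection with `p ∈ (pA**p ∩ A)^⊥⊥`. -/
def IsOpenIn [StarRing B] [CStarRing B] [StarModule ℂ B] (A : Set B) (p : Bidual B) : Prop :=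
  IsProjE p ∧ p ∈ biann (herSub A p)

/-- The functional `μq : x ↦ μ(qx)` (products taken in `B**`). -/
def fmulQ (μ : Dl B) (q : Bidual B) : Dl B :=
  LinearMap.mkContinuous
    { toFun := fun x => arens q (jj x) μ
      map_add' := fun x y => by (try dsimp only); rw [map_add, arens_add_right]; simp
      map_smul' := fun c x => by
        (try dsimp only); rw [ContinuousLinearMap.map_smul, arens_smul_right]; simp }
    (‖q‖ * ‖μ‖)
    (fun x => by
      calc ‖arens q (jj x) μ‖ ≤ ‖arens q (jj x)‖ * ‖μ‖ := (arens q (jj x)).le_opNorm _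
      _ ≤ (‖q‖ * ‖jj x‖) * ‖μ‖ := by gcongr; exact arens_norm_le _ _
      _ ≤ (‖q‖ * ‖x‖) * ‖μ‖ := by gcongr; exact norm_jj_apply_le x
      _ = ‖q‖ * ‖μ‖ * ‖x‖ := by ring)

@[simp] lemma fmulQ_apply (μ : Dl B) (q : Bidual B) (x : B) :
    fmulQ μ q x = arens q (jj x) μ := rfl

/-- The functional `qμ : x ↦ μ(xq)` (products taken in `B**`). -/
def qmulF (q : Bidual B) (μ : Dl B) : Dl B :=
  LinearMap.mkContinuous
    { toFun := fun x => arens (jj x) q μ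
      map_add' := fun x y => by (try dsimp only); rw [map_add, arens_add_left]; simp
      map_smul' := fun c x => by
        (try dsimp only); rw [ContinuousLinearMap.map_smul, arens_smul_left]; simp }
    (‖q‖ * ‖μ‖)
    (fun x => by
      calc ‖arens (jj x) q μ‖ ≤ ‖arens (jj x) q‖ * ‖μ‖ := (arens (jj x) q).le_opNorm _
      _ ≤ (‖jj x‖ * ‖q‖) * ‖μ‖ := by gcongr; exact arens_norm_le _ _
      _ ≤ (‖x‖ * ‖q‖) * ‖μ‖ := by gcongr; exact norm_jj_apply_le x
      _ = ‖q‖ * ‖μ‖ * ‖x‖ := by ring)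

@[simp] lemma qmulF_apply (q : Bidual B) (μ : Dl B) (x : B) :
    qmulF q μ x = arens (jj x) q μ := rfl

/-- The functional `qμq : x ↦ μ(qxq)` (products taken in `B**`). -/
def sandQ (q : Bidual B) (μ : Dl B) : Dl B :=
  LinearMap.mkContinuous
    { toFun := fun x => arens (arens q (jj x)) q μ
      map_add' := fun x y => by
        (try dsimp only); rw [map_add, arens_add_right, arens_add_left]; simp
      map_smul' := fun c x => by
        (try dsimp only); rw [ContinuousLinearMap.map_smul, arens_smul_right, arens_smul_left]; simp }
    (‖q‖ * ‖q‖ * ‖μ‖)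
    (fun x => by
      calc ‖arens (arens q (jj x)) q μ‖ ≤ ‖arens (arens q (jj x)) q‖ * ‖μ‖ :=
        (arens (arens q (jj x)) q).le_opNorm _
      _ ≤ (‖arens q (jj x)‖ * ‖q‖) * ‖μ‖ := by gcongr; exact arens_norm_le _ _
      _ ≤ ((‖q‖ * ‖jj x‖) * ‖q‖) * ‖μ‖ := by gcongr; exact arens_norm_le _ _
      _ ≤ ((‖q‖ * ‖x‖) * ‖q‖) * ‖μ‖ := by gcongr; exact norm_jj_apply_le x
      _ = ‖q‖ * ‖q‖ * ‖μ‖ * ‖x‖ := by ring)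

@[simp] lemma sandQ_apply (q : Bidual B) (μ : Dl B) (x : B) :
    sandQ q μ x = arens (arens q (jj x)) q μ := rfl

/-- The subspace `qB = {qb : b ∈ B} ⊆ B**`. -/
def qBmod (q : Bidual B) : Submodule ℂ (Bidual B) where
  carrier := Set.range fun b : B => arens q (jj b)
  add_mem' := by
    rintro _ _ ⟨x, rfl⟩ ⟨y, rfl⟩
    exact ⟨x + y, by (try dsimp only); rw [map_add, arens_add_right]⟩
  zero_mem' := ⟨0, by (try dsimp only); rw [map_zero, arens_zero_right]⟩
  smul_mem' := by
    rintro c _ ⟨x, rfl⟩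
    exact ⟨c • x, by (try dsimp only); rw [ContinuousLinearMap.map_smul, arens_smul_right]⟩

/-- The subspace `Bq = {bq : b ∈ B} ⊆ B**`. -/
def Bqmod (q : Bidual B) : Submodule ℂ (Bidual B) where
  carrier := Set.range fun b : B => arens (jj b) q
  add_mem' := by
    rintro _ _ ⟨x, rfl⟩ ⟨y, rfl⟩
    exact ⟨x + y, by (try dsimp only); rw [map_add, arens_add_left]⟩
  zero_mem' := ⟨0, by (try dsimp only); rw [map_zero, arens_zero_left]⟩
  smul_mem' := by
    rintro c _ ⟨x, rfl⟩
    exact ⟨c • x, by (try dsimp only); rw [ContinuousLinearMap.map_smul, arens_smul_left]⟩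

instance (q : Bidual B) : SeminormedAddCommGroup (qBmod q) :=
  @Submodule.seminormedAddCommGroup ℂ (Bidual B) _ _ _ (qBmod q)

instance (q : Bidual B) : NormedSpace ℂ (qBmod q) :=
  @Submodule.normedSpace ℂ ℂ _ _ _ (Bidual B) _ _ _ _ (qBmod q)

instance (q : Bidual B) : SeminormedAddCommGroup (Bqmod q) :=
  @Submodule.seminormedAddCommGroup ℂ (Bidual B) _ _ _ (Bqmod q)

instance (q : Bidual B) : NormedSpace ℂ (Bqmod q) :=
  @Submodule.normedSpace ℂ ℂ _ _ _ (Bidual B) _ _ _ _ (Bqmod q)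

/-- For `φ ∈ (qB)*`, the functional `φq ∈ B*` given by `x ↦ φ(qx)`. -/
def phiQ (q : Bidual B) (φ : StrongDual ℂ (qBmod q)) : Dl B :=
  LinearMap.mkContinuous
    { toFun := fun x => φ ⟨arens q (jj x), ⟨x, rfl⟩⟩
      map_add' := fun x y => by
        have h : (⟨arens q (jj (x + y)), ⟨x + y, rfl⟩⟩ : qBmod q)
            = ⟨arens q (jj x), ⟨x, rfl⟩⟩ + ⟨arens q (jj y), ⟨y, rfl⟩⟩ := by
          apply Subtype.ext
          simp [map_add, arens_add_right]
        (try dsimp only); rw [h, map_add]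
      map_smul' := fun c x => by
        have h : (⟨arens q (jj (c • x)), ⟨c • x, rfl⟩⟩ : qBmod q)
            = c • ⟨arens q (jj x), ⟨x, rfl⟩⟩ := by
          apply Subtype.ext
          simp [arens_smul_right]
        (try dsimp only); rw [h, map_smul]; simp }
    (‖φ‖ * ‖q‖)
    (fun x => by
      calc ‖φ ⟨arens q (jj x), ⟨x, rfl⟩⟩‖
          ≤ ‖φ‖ * ‖(⟨arens q (jj x), ⟨x, rfl⟩⟩ : qBmod q)‖ := φ.le_opNorm _
      _ = ‖φ‖ * ‖arens q (jj x)‖ := rfl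
      _ ≤ ‖φ‖ * (‖q‖ * ‖jj x‖) := by gcongr; exact arens_norm_le _ _
      _ ≤ ‖φ‖ * (‖q‖ * ‖x‖) := by gcongr; exact norm_jj_apply_le x
      _ = ‖φ‖ * ‖q‖ * ‖x‖ := by ring)

@[simp] lemma phiQ_apply (q : Bidual B) (φ : StrongDual ℂ (qBmod q)) (x : B) :
    phiQ q φ x = φ ⟨arens q (jj x), ⟨x, rfl⟩⟩ := rfl

/-- For `φ ∈ (Bq)*`, the functional `qφ ∈ B*` given by `x ↦ φ(xq)`. -/
def qPhi (q : Bidual B) (φ : StrongDual ℂ (Bqmod q)) : Dl B :=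
  LinearMap.mkContinuous
    { toFun := fun x => φ ⟨arens (jj x) q, ⟨x, rfl⟩⟩
      map_add' := fun x y => by
        have h : (⟨arens (jj (x + y)) q, ⟨x + y, rfl⟩⟩ : Bqmod q)
            = ⟨arens (jj x) q, ⟨x, rfl⟩⟩ + ⟨arens (jj y) q, ⟨y, rfl⟩⟩ := by
          apply Subtype.ext
          simp [map_add, arens_add_left]
        (try dsimp only); rw [h, map_add]
      map_smul' := fun c x => by
        have h : (⟨arens (jj (c • x)) q, ⟨c • x, rfl⟩⟩ : Bqmod q)
            = c • ⟨arens (jj x) q, ⟨x, rfl⟩⟩ := by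
          apply Subtype.ext
          simp [arens_smul_left]
        (try dsimp only); rw [h, map_smul]; simp }
    (‖φ‖ * ‖q‖)
    (fun x => by
      calc ‖φ ⟨arens (jj x) q, ⟨x, rfl⟩⟩‖
          ≤ ‖φ‖ * ‖(⟨arens (jj x) q, ⟨x, rfl⟩⟩ : Bqmod q)‖ := φ.le_opNorm _
      _ = ‖φ‖ * ‖arens (jj x) q‖ := rfl
      _ ≤ ‖φ‖ * (‖jj x‖ * ‖q‖) := by gcongr; exact arens_norm_le _ _
      _ ≤ ‖φ‖ * (‖x‖ * ‖q‖) := by gcongr; exact norm_jj_apply_le x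
      _ = ‖φ‖ * ‖q‖ * ‖x‖ := by ring)

@[simp] lemma qPhi_apply (q : Bidual B) (φ : StrongDual ℂ (Bqmod q)) (x : B) :
    qPhi q φ x = φ ⟨arens (jj x) q, ⟨x, rfl⟩⟩ := rfl

/-- For `ψ ∈ B*`, the element `ψq` of `(qB)*` given by `qb ↦ ψ(qb)` (canonical pairing of
`B**` with `B*`). -/
def pairRestrict (q : Bidual B) (ψ : Dl B) : StrongDual ℂ (qBmod q) :=
  LinearMap.mkContinuous
    { toFun := fun m => (m : Bidual B) ψ
      map_add' := fun m n => by simp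
      map_smul' := fun c m => by simp }
    ‖ψ‖
    (fun m => by
      calc ‖(m : Bidual B) ψ‖ ≤ ‖(m : Bidual B)‖ * ‖ψ‖ := (m : Bidual B).le_opNorm _
      _ = ‖ψ‖ * ‖m‖ := by rw [mul_comm]; rfl)

/-- Membership in the weak*-closure of a subset of `B**` (the `σ(B**, B*)`-topology). -/
def memWeakStarClosure (S : Set (Bidual B)) (m : Bidual B) : Prop :=
  StrongDual.toWeakDual m ∈ closure (⇑(StrongDual.toWeakDual) '' S)

/-- A subset of `B*` is weak*-closed (for the `σ(B*, B)`-topology). -/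
def IsWeakStarClosed (S : Set (Dl B)) : Prop :=
  IsClosed (⇑(StrongDual.toWeakDual) '' S : Set (WeakDual ℂ B))

/-- `M(C)` (for `C` the whole algebra) as a submodule of the bidual. -/
def multSub (B : Type) [NonUnitalNormedRing B]
    [NormedSpace ℂ B] [IsScalarTower ℂ B B] [SMulCommClass ℂ B B] :
    Submodule ℂ (Bidual B) where
  carrier := mult (Set.univ : Set B)
  add_mem' := by
    rintro η₁ η₂ ⟨h1, h2, h3⟩ ⟨h1', h2', h3'⟩
    refine ⟨fun f hf => ?_, fun c hc => ?_, fun c hc => ?_⟩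
    · simp [h1 f hf, h1' f hf]
    · obtain ⟨c₁, -, hc₁⟩ := h2 c hc
      obtain ⟨c₂, -, hc₂⟩ := h2' c hc
      exact ⟨c₁ + c₂, trivial, by rw [arens_add_left, hc₁, hc₂, map_add]⟩
    · obtain ⟨c₁, -, hc₁⟩ := h3 c hc
      obtain ⟨c₂, -, hc₂⟩ := h3' c hc
      exact ⟨c₁ + c₂, trivial, by rw [arens_add_right, hc₁, hc₂, map_add]⟩
  zero_mem' := by
    refine ⟨fun f _ => rfl, fun c _ => ⟨0, trivial, by rw [arens_zero_left, map_zero]⟩,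
      fun c _ => ⟨0, trivial, by rw [arens_zero_right, map_zero]⟩⟩
  smul_mem' := by
    rintro s η ⟨h1, h2, h3⟩
    refine ⟨fun f hf => ?_, fun c hc => ?_, fun c hc => ?_⟩
    · simp [h1 f hf]
    · obtain ⟨c₁, -, hc₁⟩ := h2 c hc
      exact ⟨s • c₁, trivial, by rw [arens_smul_left, hc₁, ContinuousLinearMap.map_smul]⟩
    · obtain ⟨c₁, -, hc₁⟩ := h3 c hc
      exact ⟨s • c₁, trivial, by rw [arens_smul_right, hc₁, ContinuousLinearMap.map_smul]⟩

/-- The transpose (dual map) of a continuous linear map. -/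
def dualL {E F : Type} [NormedAddCommGroup E] [NormedSpace ℂ E]
    [NormedAddCommGroup F] [NormedSpace ℂ F] (T : E →L[ℂ] F) :
    StrongDual ℂ F →L[ℂ] StrongDual ℂ E :=
  (ContinuousLinearMap.compL ℂ E F ℂ).flip T

section Unital

variable {B : Type} [NormedRing B] [StarRing B] [CStarRing B] [NormedAlgebra ℂ B]
  [StarModule ℂ B] [PartialOrder B] [StarOrderedRing B]

/-- `q` is a closed projection in `B**`: `q` is a projection and `1 - q` is open. -/
def IsClosedP (q : Bidual B) : Prop :=
  IsProjE q ∧ IsOpenP (jj (1 : B) - q)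

end Unital

/-!
`p ∈ (pA**p ∩ A)^⊥⊥` puts `p` in the weak* closure of `D`, and `p` is a two-sided unit for `C`.
For a finite `s ⊆ C`, the double transpose of `d ↦ (dy, yd)_{y ∈ s}` therefore sends `p` to
`(y, y)_{y ∈ s}`, and Hahn–Banach puts this point in the norm closure of the image of `D`:
`D` contains approximate units for every finite subset of `C`. For `x ∈ M(C : D)` the elements
`xe ∈ D` then approximate `x` strictly, as `(x - xe)b = x(b - eb)` and `c(x - xe) = cx - (cx)e`
with `cx ∈ C`. Conversely, if `dᵢ → x` strictly with `dᵢ ∈ D`, then `xd` and `dx` are norm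
limits of `dᵢd` and `ddᵢ`, which lie in the closed algebra `D`.
-/

section Arens

lemma norm_jj (b : B) : ‖jj b‖ = ‖b‖ :=
  (NormedSpace.inclusionInDoubleDualLi ℂ (E := B)).norm_map b

lemma jj_mul (a b : B) : arens (jj a) (jj b) = jj (a * b) := rfl

lemma arens_assoc (m n k : Bidual B) : arens (arens m n) k = arens m (arens n k) := by
  have hfA (f : Dl B) (a b : B) : fA (fA f a) b = fA f (a * b) := by
    ext c; simp [mul_assoc]
  have hnF (f : Dl B) (a : B) : nF k (fA f a) = fA (nF k f) a := by
    ext b; simp [hfA]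
  ext f
  simp only [arens_apply]
  congr 1
  ext a
  simp [hnF]

lemma arens_sub_left (m₁ m₂ n : Bidual B) : arens (m₁ - m₂) n = arens m₁ n - arens m₂ n :=
  map_sub (AddMonoidHom.mk' (arens · n) (arens_add_left · · n)) m₁ m₂

lemma arens_sub_right (m n₁ n₂ : Bidual B) : arens m (n₁ - n₂) = arens m n₁ - arens m n₂ :=
  map_sub (AddMonoidHom.mk' (arens m) (arens_add_right m)) n₁ n₂

lemma continuous_arens_left (n : Bidual B) : Continuous fun m : Bidual B => arens m n :=
  AddMonoidHomClass.continuous_of_bound (AddMonoidHom.mk' (arens · n) (arens_add_left · · n)) ‖n‖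
    fun m => (arens_norm_le m n).trans_eq (mul_comm _ _)

lemma continuous_arens_right (m : Bidual B) : Continuous (arens m) :=
  AddMonoidHomClass.continuous_of_bound (AddMonoidHom.mk' (arens m) (arens_add_right m)) ‖m‖
    (arens_norm_le m)

end Arens

section Hereditary

variable {p : Bidual B}

lemma arens_proj_jj_of_mem_herB (hpp : arens p p = p) {b : B} (hb : b ∈ herB p) :
    arens p (jj b) = jj b := by
  obtain ⟨m, hm⟩ := hb
  rw [← hm, ← arens_assoc, ← arens_assoc, hpp]

lemma arens_jj_proj_of_mem_herB (hpp : arens p p = p) {b : B} (hb : b ∈ herB p) :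
    arens (jj b) p = jj b := by
  obtain ⟨m, hm⟩ := hb
  rw [← hm, arens_assoc, hpp]

lemma mem_herB_iff (hpp : arens p p = p) {b : B} :
    b ∈ herB p ↔ arens (arens p (jj b)) p = jj b :=
  ⟨fun hb => by rw [arens_proj_jj_of_mem_herB hpp hb, arens_jj_proj_of_mem_herB hpp hb],
    fun h => ⟨jj b, h⟩⟩

lemma isClosed_herB (hpp : arens p p = p) : IsClosed (herB p) := by
  simp_rw [Set.ext fun b => mem_herB_iff hpp]
  exact isClosed_eq ((continuous_arens_left p).comp
    ((continuous_arens_right p).comp (jj (B := B)).continuous)) (jj (B := B)).continuous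

def herBSubalgebra (hpp : arens p p = p) : NonUnitalSubalgebra ℂ B where
  carrier := herB p
  add_mem' := by
    rintro a b ⟨m, hm⟩ ⟨n, hn⟩
    exact ⟨m + n, by rw [arens_add_right, arens_add_left, hm, hn, map_add]⟩
  zero_mem' := ⟨0, by rw [arens_zero_right, arens_zero_left, map_zero]⟩
  mul_mem' := by
    intro a b ha hb
    refine ⟨jj (a * b), ?_⟩
    rw [← jj_mul, ← arens_assoc, arens_proj_jj_of_mem_herB hpp ha, arens_assoc,
      arens_jj_proj_of_mem_herB hpp hb]
  smul_mem' := by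
    rintro c a ⟨m, hm⟩
    exact ⟨c • m, by rw [arens_smul_right, arens_smul_left, hm, map_smul]⟩

lemma herSub_subset_inter_herB (A : Set B) (p : Bidual B) : herSub A p ⊆ A ∩ herB p :=
  fun _ ⟨ha, m, _, hm⟩ => ⟨ha, m, hm⟩

end Hereditary

section BidualMap

variable {X E F : Type} [NormedAddCommGroup X] [NormedSpace ℂ X]
  [NormedAddCommGroup E] [NormedSpace ℂ E] [NormedAddCommGroup F] [NormedSpace ℂ F]

lemma dualL_dualL_apply (T : X →L[ℂ] E) (m : StrongDual ℂ (StrongDual ℂ X))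
    (φ : StrongDual ℂ E) : dualL (dualL T) m φ = m (φ.comp T) := rfl

lemma dualL_dualL_prod {T₁ : X →L[ℂ] E} {T₂ : X →L[ℂ] F} {m : StrongDual ℂ (StrongDual ℂ X)}
    {c₁ : E} {c₂ : F} (h₁ : dualL (dualL T₁) m = NormedSpace.inclusionInDoubleDual ℂ E c₁)
    (h₂ : dualL (dualL T₂) m = NormedSpace.inclusionInDoubleDual ℂ F c₂) :
    dualL (dualL (T₁.prod T₂)) m = NormedSpace.inclusionInDoubleDual ℂ (E × F) (c₁, c₂) := by
  ext φ
  have hφ : φ.comp (T₁.prod T₂) =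
      (φ.comp (.inl ℂ E F)).comp T₁ + (φ.comp (.inr ℂ E F)).comp T₂ := by
    ext x; simp [← map_add]
  rw [dualL_dualL_apply, hφ, map_add, ← dualL_dualL_apply T₁, ← dualL_dualL_apply T₂, h₁, h₂]
  simp [← map_add]

lemma dualL_dualL_pi {ι : Type} [Fintype ι] [DecidableEq ι] {T : ι → X →L[ℂ] E}
    {m : StrongDual ℂ (StrongDual ℂ X)} {c : ι → E}
    (h : ∀ i, dualL (dualL (T i)) m = NormedSpace.inclusionInDoubleDual ℂ E (c i)) :
    dualL (dualL (ContinuousLinearMap.pi T)) m =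
      NormedSpace.inclusionInDoubleDual ℂ (ι → E) c := by
  ext φ
  have hφ : φ.comp (ContinuousLinearMap.pi T) =
      ∑ i, (φ.comp (.single ℂ (fun _ => E) i)).comp (T i) := by
    ext x
    rw [sum_apply]
    exact (ContinuousLinearMap.sum_comp_single ℂ (fun _ => E) φ
      (ContinuousLinearMap.pi T x)).symm
  rw [dualL_dualL_apply, hφ, map_sum, NormedSpace.dual_def,
    ← ContinuousLinearMap.sum_comp_single ℂ (fun _ => E) φ c]
  exact Finset.sum_congr rfl fun i _ => DFunLike.congr_fun (h i) _

end BidualMap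

lemma dualL_dualL_mul_flip (m : Bidual B) (y : B) :
    dualL (dualL ((ContinuousLinearMap.mul ℂ B).flip y)) m = arens m (jj y) := rfl

lemma dualL_dualL_mul (m : Bidual B) (y : B) :
    dualL (dualL (ContinuousLinearMap.mul ℂ B y)) m = arens (jj y) m := rfl

section Biannihilator

variable {E : Type} [NormedAddCommGroup E] [NormedSpace ℂ E]

lemma biann_mono {S T : Set B} (h : S ⊆ T) : biann S ⊆ biann T :=
  fun _ hm f hf => hm f fun _ ha => hf _ (h ha)

lemma exists_mem_apply_eq_of_mem_biann (Dm : Submodule ℂ B) {m : Bidual B}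
    (hm : m ∈ biann (Dm : Set B)) (g : Dl B) : ∃ d ∈ Dm, g d = m g := by
  by_cases hg : ∀ d ∈ Dm, g d = 0
  · exact ⟨0, Dm.zero_mem, by rw [map_zero, hm g hg]⟩
  · push Not at hg
    obtain ⟨d, hd, hgd⟩ := hg
    exact ⟨(m g / g d) • d, Dm.smul_mem _ hd,
      by rw [map_smul, smul_eq_mul, div_mul_cancel₀ _ hgd]⟩

lemma mem_closure_image_of_mem_biann (Dm : Submodule ℂ B) {m : Bidual B}
    (hm : m ∈ biann (Dm : Set B)) (T : B →L[ℂ] E) {c : E}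
    (hc : dualL (dualL T) m = NormedSpace.inclusionInDoubleDual ℂ E c) :
    c ∈ closure (T '' Dm) := by
  by_contra hcl
  have hconv : Convex ℝ (closure (T '' Dm)) :=
    ((Dm.map (T : B →ₗ[ℂ] E)).restrictScalars ℝ).convex.closure
  obtain ⟨φ, u, hlt, hgt⟩ :=
    RCLike.geometric_hahn_banach_closed_point (𝕜 := ℂ) hconv isClosed_closure hcl
  obtain ⟨d, hd, hφd⟩ := exists_mem_apply_eq_of_mem_biann Dm hm (φ.comp T)
  have hφTd : φ (T d) = φ c := hφd.trans (DFunLike.congr_fun hc φ)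
  have hTd := hlt (T d) (subset_closure ⟨d, hd, rfl⟩)
  rw [hφTd] at hTd
  exact hTd.not_gt hgt

end Biannihilator

def HasLocalApproxUnits (D C : Set B) : Prop :=
  ∀ s : Finset B, (s : Set B) ⊆ C → ∀ ε > 0,
    ∃ e ∈ D, ∀ y ∈ s, ‖e * y - y‖ < ε ∧ ‖y * e - y‖ < ε

lemma hasLocalApproxUnits_of_mem_biann {p : Bidual B} (hpp : arens p p = p)
    (Dm : Submodule ℂ B) (hp : p ∈ biann (Dm : Set B)) :
    HasLocalApproxUnits Dm (herB p) := by
  classical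
  intro s hs ε hε
  let T : B →L[ℂ] (s → B × B) := ContinuousLinearMap.pi fun y =>
    ((ContinuousLinearMap.mul ℂ B).flip y).prod (ContinuousLinearMap.mul ℂ B y)
  have hT : dualL (dualL T) p =
      NormedSpace.inclusionInDoubleDual ℂ (s → B × B) fun y => ((y : B), (y : B)) :=
    dualL_dualL_pi fun y => dualL_dualL_prod
      (by rw [dualL_dualL_mul_flip, arens_proj_jj_of_mem_herB hpp (hs y.2)]; rfl)
      (by rw [dualL_dualL_mul, arens_jj_proj_of_mem_herB hpp (hs y.2)]; rfl)
  obtain ⟨_, ⟨e, he, rfl⟩, hdist⟩ :=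
    Metric.mem_closure_iff.1 (mem_closure_image_of_mem_biann Dm hp T hT) ε hε
  rw [dist_comm, dist_eq_norm] at hdist
  refine ⟨e, he, fun y hy => ?_⟩
  have hy : ‖(T e - fun y : s => ((y : B), (y : B))) ⟨y, hy⟩‖ < ε :=
    (norm_le_pi_norm _ _).trans_lt hdist
  exact ⟨(norm_fst_le _).trans_lt hy, (norm_snd_le _).trans_lt hy⟩

section StrictClosure

variable {C : Set B} {x : Bidual B}

lemma inStrictClosure_of_hasLocalApproxUnits {D : Set B} (hD : HasLocalApproxUnits D C)
    (hxC : ∀ c ∈ C, ∃ c' ∈ C, arens (jj c) x = jj c')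
    (hxD : ∀ e ∈ D, ∃ d ∈ D, arens x (jj e) = jj d) :
    inStrictClosure C (jset D) x := by
  classical
  intro F hF ε hε
  choose! w hwC hw using hxC
  obtain ⟨δ, hδ, hδε⟩ : ∃ δ > 0, ‖x‖ * δ + δ = ε :=
    ⟨ε / (‖x‖ + 1), by positivity, by field_simp⟩
  obtain ⟨e, he, hes⟩ := hD (F.image Prod.fst ∪ F.image (w ∘ Prod.snd))
    (by
      simp only [Finset.coe_union, Finset.coe_image, Set.union_subset_iff, Set.image_subset_iff]
      exact ⟨fun bc hbc => (hF bc hbc).1, fun bc hbc => hwC _ (hF bc hbc).2⟩)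
    δ hδ
  obtain ⟨d, hd, hxe⟩ := hxD e he
  refine ⟨jj d, ⟨d, hd, rfl⟩, fun ⟨b, c⟩ hbc => ?_⟩
  have hb := (hes b (Finset.mem_union_left _ (Finset.mem_image_of_mem _ hbc))).1
  have hc := (hes (w c) (Finset.mem_union_right _ (Finset.mem_image_of_mem _ hbc))).2
  have hxb : arens (x - jj d) (jj b) = arens x (jj (b - e * b)) := by
    rw [arens_sub_left, ← hxe, arens_assoc, jj_mul, ← arens_sub_right, map_sub]
  have hcx : arens (jj c) (x - jj d) = jj (w c - w c * e) := by
    rw [arens_sub_right, ← hxe, ← arens_assoc, hw c (hF _ hbc).2, jj_mul, map_sub]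
  calc ‖arens (x - jj d) (jj b)‖ + ‖arens (jj c) (x - jj d)‖
      ≤ ‖x‖ * ‖b - e * b‖ + ‖w c - w c * e‖ := by
        rw [hxb, hcx, norm_jj, ← norm_jj (b - e * b)]
        gcongr
        exact arens_norm_le _ _
    _ < ‖x‖ * δ + δ := by
        rw [norm_sub_rev b, norm_sub_rev (w c)]
        exact add_lt_add_of_le_of_lt (mul_le_mul_of_nonneg_left hb.le (norm_nonneg x)) hc
    _ = ε := hδε

variable {D : NonUnitalSubalgebra ℂ B}

lemma mem_of_inStrictClosure_of_arens_jj_eq (hDclosed : IsClosed (D : Set B))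
    (hDC : (D : Set B) ⊆ C) (hx : inStrictClosure C (jset D) x) {d y : B} (hd : d ∈ D)
    (hy : arens x (jj d) = jj y) : y ∈ D := by
  refine hDclosed.closure_subset (Metric.mem_closure_iff.2 fun δ hδ => ?_)
  obtain ⟨_, ⟨d', hd', rfl⟩, hd'x⟩ := hx {(d, d)} (by simpa using hDC hd) δ hδ
  refine ⟨d' * d, D.mul_mem hd' hd, ?_⟩
  rw [dist_eq_norm, ← norm_jj, map_sub, ← hy, ← jj_mul, ← arens_sub_left]
  exact (le_add_of_nonneg_right (norm_nonneg (arens (jj d) (x - jj d')))).trans_lt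
    (hd'x (d, d) (Finset.mem_singleton_self _))

lemma mem_of_inStrictClosure_of_jj_arens_eq (hDclosed : IsClosed (D : Set B))
    (hDC : (D : Set B) ⊆ C) (hx : inStrictClosure C (jset D) x) {d y : B} (hd : d ∈ D)
    (hy : arens (jj d) x = jj y) : y ∈ D := by
  refine hDclosed.closure_subset (Metric.mem_closure_iff.2 fun δ hδ => ?_)
  obtain ⟨_, ⟨d', hd', rfl⟩, hd'x⟩ := hx {(d, d)} (by simpa using hDC hd) δ hδ
  refine ⟨d * d', D.mul_mem hd hd', ?_⟩
  rw [dist_eq_norm, ← norm_jj, map_sub, ← hy, ← jj_mul, ← arens_sub_right]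
  exact (le_add_of_nonneg_left (norm_nonneg (arens (x - jj d') (jj d)))).trans_lt
    (hd'x (d, d) (Finset.mem_singleton_self _))

end StrictClosure

section Statements

variable {B : Type} [NormedRing B] [StarRing B] [CStarRing B] [NormedAlgebra ℂ B]
  [StarModule ℂ B] [CompleteSpace B] [PartialOrder B] [StarOrderedRing B]

theorem open_implies_mult_eq_strict_closure_general
    (A : Subalgebra ℂ B) (hAclosed : IsClosed (A : Set B))
    (p : Bidual B)
    (C : Set B) (hC : C = herB p) (D : Set B) (hD : D = (A : Set B) ∩ C)
    (hopen : IsOpenIn (A : Set B) p) :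
    multRel C D = {x | x ∈ mult C ∧ inStrictClosure C (jset D) x} := by
  obtain ⟨⟨hpp, -⟩, hpA⟩ := hopen
  subst hC hD
  let Dₐ : NonUnitalSubalgebra ℂ B := A.toNonUnitalSubalgebra ⊓ herBSubalgebra hpp
  change multRel _ (Dₐ : Set B) = {x | x ∈ mult _ ∧ inStrictClosure _ (jset (Dₐ : Set B)) x}
  have hpD : p ∈ biann (Dₐ : Set B) := biann_mono (herSub_subset_inter_herB _ p) hpA
  have hDclosed : IsClosed (Dₐ : Set B) := hAclosed.inter (isClosed_herB hpp)
  have hDC : (Dₐ : Set B) ⊆ herB p := Set.inter_subset_right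
  ext x
  constructor
  · rintro ⟨hxM, hxD, -⟩
    exact ⟨hxM, inStrictClosure_of_hasLocalApproxUnits
      (hasLocalApproxUnits_of_mem_biann hpp Dₐ.toSubmodule hpD) hxM.2.2 hxD⟩
  · rintro ⟨hxM, hx⟩
    refine ⟨hxM, fun d hd => ?_, fun d hd => ?_⟩
    · obtain ⟨y, -, hy⟩ := hxM.2.1 d (hDC hd)
      exact ⟨y, mem_of_inStrictClosure_of_arens_jj_eq hDclosed hDC hx hd hy, hy⟩
    · obtain ⟨y, -, hy⟩ := hxM.2.2 d (hDC hd)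
      exact ⟨y, mem_of_inStrictClosure_of_jj_arens_eq hDclosed hDC hx hd hy, hy⟩

/-- If `p` is open in `A**`, then `M(C:D)` equals the closure of `D`
inside `M(C)` with respect to the strict topology `β_C`. -/
theorem open_implies_mult_eq_strict_closure
    (A : Subalgebra ℂ B) (hAclosed : IsClosed (A : Set B))
    (p : Bidual B) (hp : IsOpenP p)
    (C : Set B) (hC : C = herB p) (D : Set B) (hD : D = (A : Set B) ∩ C)
    (hopen : IsOpenIn (A : Set B) p) :
    multRel C D = {x | x ∈ mult C ∧ inStrictClosure C (jset D) x} :=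
  open_implies_mult_eq_strict_closure_general A hAclosed p C hC D hD hopen

end Statements

end OAPaper
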